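/- Scalar reduction for linear models (Theorem A.1 with Γ = Π = all finitely supported distributions): let l : ℝ × ℝ → ℝ be differentiable in its first argument with partial derivative l', let w ∈ ℝ^d, and for (x,y) ∈ ℝ^d × ℝ set g(x,y) = l'(⟨w,x⟩, y)·x. Let μ be a finitely supported probability measure on ℝ^d × ℝ with c := ⟨w, g(μ)⟩ ≠ 0, and let λ ∈ [0,1]. Then there exists a finitely supported probability measure ν on ℝ^d × ℝ with (1−λ)·g(μ) + λ·g(ν) = 0 if and only if there exists a finitely supported probability measure ν' on ℝ^d × ℝ with (1−λ)·c + λ·E_{(x,y)∼ν'}[⟨w,x⟩·l'(⟨w,x⟩, y)] = 0. -/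

import Mathlib

open scoped RealInnerProductSpace BigOperators

/-- A finitely supported probability measure, represented as a finitely supported
weight function which is nonnegative and sums to 1. -/
def IsFinProb {Z : Type*} (p : Z →₀ ℝ) : Prop :=
  (∀ z, 0 ≤ p z) ∧ p.sum (fun _ w => w) = 1

/-- Expectation `E_{z ∼ p}[g z]` of a vector-valued map under a finitely supported measure. -/
noncomputable def expect {Z E : Type*} [AddCommMonoid E] [Module ℝ E]
    (p : Z →₀ ℝ) (g : Z → E) : E :=
  p.sum fun z w => w • g z

/-- Pointwise gradient `g(x,y) = l'(⟨w,x⟩, y)·x` of the linear-model loss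
`ℓ((x,y); w) = l(⟨w,x⟩, y)`. -/
noncomputable def glin {d : ℕ} (l' : ℝ → ℝ → ℝ) (w : EuclideanSpace ℝ (Fin d))
    (p : EuclideanSpace ℝ (Fin d) × ℝ) : EuclideanSpace ℝ (Fin d) :=
  l' ⟪w, p.1⟫ p.2 • p.1

/-
The scalar problem follows from the vector one by pairing with `w`, since
`⟨w, g(x,y)⟩ = ⟨w,x⟩ l'(⟨w,x⟩, y)`. Conversely, put `c = ⟨w, g(μ)⟩` and `u = c⁻¹ g(μ)`, so
`⟨w, u⟩ = 1`. Pushing `ν'` forward along `(x, y) ↦ (⟨w,x⟩ u, y)` keeps `⟨w,x⟩` and makes every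
gradient a multiple of `u`, namely `⟨w,x⟩ l'(⟨w,x⟩, y) u`; so the vector equation becomes the
scalar one multiplied by `c⁻¹ g(μ)`.
-/

section Expect

variable {Z Z' E : Type*}

theorem IsFinProb.mapDomain {p : Z →₀ ℝ} (hp : IsFinProb p) (f : Z → Z') :
    IsFinProb (p.mapDomain f) := by
  refine ⟨Finsupp.mapDomain_nonneg (f := f) hp.1, ?_⟩
  rw [Finsupp.sum_mapDomain_index (fun _ => rfl) (fun _ _ _ => rfl)]
  exact hp.2

variable [AddCommMonoid E] [Module ℝ E]

theorem expect_mapDomain (p : Z →₀ ℝ) (f : Z → Z') (g : Z' → E) :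
    expect (p.mapDomain f) g = expect p (g ∘ f) :=
  Finsupp.sum_mapDomain_index (by simp) (fun _ _ _ => add_smul _ _ _)

theorem expect_smul_const (p : Z →₀ ℝ) (a : Z → ℝ) (v : E) :
    expect p (fun z => a z • v) = expect p a • v := by
  simp only [expect, Finsupp.sum, smul_smul, smul_eq_mul, Finset.sum_smul]

end Expect

theorem inner_expect {Z F : Type*} [NormedAddCommGroup F] [InnerProductSpace ℝ F]
    (w : F) (p : Z →₀ ℝ) (g : Z → F) :
    ⟪w, expect p g⟫ = expect p (fun z => ⟪w, g z⟫) := by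
  simp only [expect, Finsupp.sum, inner_sum, real_inner_smul_right, smul_eq_mul]

section LinearModel

variable {d : ℕ} (l' : ℝ → ℝ → ℝ) (w : EuclideanSpace ℝ (Fin d))

theorem inner_expect_glin (p : (EuclideanSpace ℝ (Fin d) × ℝ) →₀ ℝ) :
    ⟪w, expect p (glin l' w)⟫ = expect p (fun q => ⟪w, q.1⟫ * l' ⟪w, q.1⟫ q.2) := by
  simp only [inner_expect, glin, real_inner_smul_right, mul_comm]

variable {l' w}

theorem glin_smul_of_inner_eq_one {u : EuclideanSpace ℝ (Fin d)} (hu : ⟪w, u⟫ = 1)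
    (s y : ℝ) : glin l' w (s • u, y) = (s * l' s y) • u := by
  simp only [glin, real_inner_smul_right, hu, mul_one, smul_smul, mul_comm]

theorem expect_glin_mapDomain_of_inner_eq_one {u : EuclideanSpace ℝ (Fin d)}
    (hu : ⟪w, u⟫ = 1) (p : (EuclideanSpace ℝ (Fin d) × ℝ) →₀ ℝ) :
    expect (p.mapDomain fun q => (⟪w, q.1⟫ • u, q.2)) (glin l' w) =
      expect p (fun q => ⟪w, q.1⟫ * l' ⟪w, q.1⟫ q.2) • u := by
  rw [expect_mapDomain, ← expect_smul_const]
  exact congrArg _ (funext fun q => glin_smul_of_inner_eq_one hu _ _)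

end LinearModel

theorem stmt11_general {d : ℕ} (l' : ℝ → ℝ → ℝ)
    (w : EuclideanSpace ℝ (Fin d))
    (μ : (EuclideanSpace ℝ (Fin d) × ℝ) →₀ ℝ)
    (hc : ⟪w, expect μ (glin l' w)⟫ ≠ 0)
    (lam : ℝ) :
    (∃ ν : (EuclideanSpace ℝ (Fin d) × ℝ) →₀ ℝ, IsFinProb ν ∧
        (1 - lam) • expect μ (glin l' w) + lam • expect ν (glin l' w) = 0) ↔
    (∃ ν' : (EuclideanSpace ℝ (Fin d) × ℝ) →₀ ℝ, IsFinProb ν' ∧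
        (1 - lam) * ⟪w, expect μ (glin l' w)⟫ +
          lam * expect ν' (fun p => ⟪w, p.1⟫ * l' ⟪w, p.1⟫ p.2) = 0) := by
  constructor
  · rintro ⟨ν, hν, h⟩
    refine ⟨ν, hν, ?_⟩
    simpa only [inner_add_right, real_inner_smul_right, inner_expect_glin, inner_zero_right]
      using congrArg (⟪w, ·⟫) h
  · rintro ⟨ν', hν', hs⟩
    set G := expect μ (glin l' w)
    set c := ⟪w, G⟫
    have hu : ⟪w, c⁻¹ • G⟫ = 1 := by rw [real_inner_smul_right, inv_mul_cancel₀ hc]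
    refine ⟨_, hν'.mapDomain fun q => (⟪w, q.1⟫ • c⁻¹ • G, q.2), ?_⟩
    rw [expect_glin_mapDomain_of_inner_eq_one hu]
    linear_combination (norm := module) (c⁻¹ * hs) • G - ((1 - lam) * inv_mul_cancel₀ hc) • G

/-- scalar reduction for linear models (Theorem A.1 with
Γ = Π = all finitely supported distributions): the vector-valued gradient-cancellation
problem is solvable iff the scalar one (obtained by pairing with `w`) is solvable. -/
theorem stmt11 {d : ℕ} (l : ℝ → ℝ → ℝ) (l' : ℝ → ℝ → ℝ)
    (hl : ∀ (t y : ℝ), HasDerivAt (fun s => l s y) (l' t y) t)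
    (w : EuclideanSpace ℝ (Fin d))
    (μ : (EuclideanSpace ℝ (Fin d) × ℝ) →₀ ℝ) (hμ : IsFinProb μ)
    (hc : ⟪w, expect μ (glin l' w)⟫ ≠ 0)
    (lam : ℝ) (h0 : 0 ≤ lam) (h1 : lam ≤ 1) :
    (∃ ν : (EuclideanSpace ℝ (Fin d) × ℝ) →₀ ℝ, IsFinProb ν ∧
        (1 - lam) • expect μ (glin l' w) + lam • expect ν (glin l' w) = 0) ↔
    (∃ ν' : (EuclideanSpace ℝ (Fin d) × ℝ) →₀ ℝ, IsFinProb ν' ∧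
        (1 - lam) * ⟪w, expect μ (glin l' w)⟫ +
          lam * expect ν' (fun p => ⟪w, p.1⟫ * l' ⟪w, p.1⟫ p.2) = 0) :=
  stmt11_general l' w μ hc lam
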